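/- Let (A,B,C,D) be a linear system satisfying the reciprocity relations with respect to a signature matrix σ and an invertible symmetric G: AᵀG = GA, BᵀG = σC, σD = Dᵀσ. Let (x,u,y) be a trajectory defined on all of ℝ, i.e., x : ℝ → ℝⁿ differentiable with x'(t) = Ax(t) + Bu(t) and y(t) = Cx(t) + Du(t). Then for every t, the function t ↦ x(−t)ᵀG x(t) is differentiable with derivative −u(−t)ᵀσy(t) + y(−t)ᵀσu(t). -/

import Mathlib

/-!
By the product and chain rules the derivative of `x(-s)ᵀ G x(s)` at `t` is
`-(A x(-t) + B u(-t))ᵀ G x(t) + x(-t)ᵀ G (A x(t) + B u(t))`. The reciprocity relations make the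
`A`-terms cancel (`AᵀG = GA`) and turn the `B`-terms into `C`-terms (`BᵀG = σC` and its transpose
`GB = Cᵀσ`), while the `D`-terms that appear on the output side cancel because `σD = Dᵀσ`.
-/

open Matrix

section Derivatives

variable {𝕜 : Type*} [NontriviallyNormedField 𝕜] {ι : Type*} [Fintype ι]
  {f g : 𝕜 → ι → 𝕜} {f' g' : ι → 𝕜} {t : 𝕜}

theorem HasDerivAt.dotProduct (hf : HasDerivAt f f' t) (hg : HasDerivAt g g' t) :
    HasDerivAt (fun s => f s ⬝ᵥ g s) (f' ⬝ᵥ g t + f t ⬝ᵥ g') t :=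
  (HasDerivAt.fun_sum (u := Finset.univ) fun i _ =>
    (hasDerivAt_pi.1 hf i).fun_mul (hasDerivAt_pi.1 hg i)).congr_deriv Finset.sum_add_distrib

theorem HasDerivAt.mulVec {κ : Type*} (M : Matrix κ ι 𝕜) (hf : HasDerivAt f f' t) :
    HasDerivAt (fun s => M *ᵥ f s) (M *ᵥ f') t :=
  hasDerivAt_pi.2 fun i =>
    HasDerivAt.fun_sum fun j _ => (hasDerivAt_pi.1 hf j).const_mul (M i j)

end Derivatives

theorem Matrix.mulVec_dotProduct_mulVec {R ι κ μ : Type*} [CommSemiring R] [Fintype ι] [Fintype κ]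
    [Fintype μ] (M : Matrix ι κ R) (N : Matrix ι μ R) (a : κ → R) (b : μ → R) :
    (M *ᵥ a) ⬝ᵥ (N *ᵥ b) = a ⬝ᵥ ((Mᵀ * N) *ᵥ b) := by
  rw [← mulVec_mulVec, dotProduct_mulVec a, vecMul_transpose]

theorem reciprocal_dotProduct_identity {R ι κ : Type*} [CommRing R] [Fintype ι] [Fintype κ]
    {A G : Matrix ι ι R} {B : Matrix ι κ R} {C : Matrix κ ι R} {D σ : Matrix κ κ R}
    (hG : Gᵀ = G) (hσ : σᵀ = σ)
    (hA : Aᵀ * G = G * A) (hBC : Bᵀ * G = σ * C) (hD : σ * D = Dᵀ * σ)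
    (x₁ x₂ : ι → R) (u₁ u₂ : κ → R) :
    -((A *ᵥ x₁ + B *ᵥ u₁) ⬝ᵥ (G *ᵥ x₂)) + x₁ ⬝ᵥ (G *ᵥ (A *ᵥ x₂ + B *ᵥ u₂)) =
      -(u₁ ⬝ᵥ (σ *ᵥ (C *ᵥ x₂ + D *ᵥ u₂))) + (C *ᵥ x₁ + D *ᵥ u₁) ⬝ᵥ (σ *ᵥ u₂) := by
  have hGB : G * B = Cᵀ * σ := by
    simpa only [transpose_mul, transpose_transpose, hG, hσ] using congrArg transpose hBC
  simp only [mulVec_add, add_dotProduct, dotProduct_add, mulVec_dotProduct_mulVec, mulVec_mulVec,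
    hA, hBC, hGB, ← hD]
  ring

theorem reciprocal_time_reversed_identity_general {n m : ℕ}
    (A : Matrix (Fin n) (Fin n) ℝ) (B : Matrix (Fin n) (Fin m) ℝ)
    (C : Matrix (Fin m) (Fin n) ℝ) (D : Matrix (Fin m) (Fin m) ℝ)
    (σ : Matrix (Fin m) (Fin m) ℝ) (hσdiag : σ.IsDiag)
    (G : Matrix (Fin n) (Fin n) ℝ) (hGsym : Gᵀ = G)
    (hrec1 : Aᵀ * G = G * A) (hrec2 : Bᵀ * G = σ * C) (hrec3 : σ * D = Dᵀ * σ)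
    (x : ℝ → Fin n → ℝ) (u : ℝ → Fin m → ℝ) (y : ℝ → Fin m → ℝ)
    (hx : ∀ t, HasDerivAt x (A *ᵥ x t + B *ᵥ u t) t)
    (hy : ∀ t, y t = C *ᵥ x t + D *ᵥ u t) :
    ∀ t, HasDerivAt (fun s => x (-s) ⬝ᵥ (G *ᵥ x s))
      (-(u (-t) ⬝ᵥ (σ *ᵥ y t)) + y (-t) ⬝ᵥ (σ *ᵥ u t)) t := by
  intro t
  have hxrev : HasDerivAt (fun s => x (-s)) (-(A *ᵥ x (-t) + B *ᵥ u (-t))) t :=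
    ((hx (-t)).scomp t (hasDerivAt_neg t)).congr_deriv (neg_one_smul ℝ _)
  rw [hy, hy, ← reciprocal_dotProduct_identity hGsym hσdiag.isSymm hrec1 hrec2 hrec3,
    ← neg_dotProduct]
  exact hxrev.dotProduct ((hx t).mulVec G)

/-- For a reciprocal system, along any trajectory `(x,u,y)` defined on all of `ℝ`,
`d/dt (x(-t)ᵀ G x(t)) = -u(-t)ᵀ σ y(t) + y(-t)ᵀ σ u(t)`. -/
theorem reciprocal_time_reversed_identity {n m : ℕ}
    (A : Matrix (Fin n) (Fin n) ℝ) (B : Matrix (Fin n) (Fin m) ℝ)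
    (C : Matrix (Fin m) (Fin n) ℝ) (D : Matrix (Fin m) (Fin m) ℝ)
    (σ : Matrix (Fin m) (Fin m) ℝ) (hσdiag : σ.IsDiag)
    (hσsign : ∀ i, σ i i = 1 ∨ σ i i = -1)
    (G : Matrix (Fin n) (Fin n) ℝ) (hGsym : Gᵀ = G) (hGinv : IsUnit G)
    (hrec1 : Aᵀ * G = G * A) (hrec2 : Bᵀ * G = σ * C) (hrec3 : σ * D = Dᵀ * σ)
    (x : ℝ → Fin n → ℝ) (u : ℝ → Fin m → ℝ) (y : ℝ → Fin m → ℝ)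
    (hx : ∀ t, HasDerivAt x (A *ᵥ x t + B *ᵥ u t) t)
    (hy : ∀ t, y t = C *ᵥ x t + D *ᵥ u t) :
    ∀ t, HasDerivAt (fun s => x (-s) ⬝ᵥ (G *ᵥ x s))
      (-(u (-t) ⬝ᵥ (σ *ᵥ y t)) + y (-t) ⬝ᵥ (σ *ᵥ u t)) t :=
  reciprocal_time_reversed_identity_general A B C D σ hσdiag G hGsym hrec1 hrec2 hrec3 x u y hx hy
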